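/- Suppose M = g_M(A, X, U) and Y = g_Y(A, X, U), where for every fixed (a, x) the maps u ↦ g_M(a,x,u) and u ↦ g_Y(a,x,u) are strictly increasing continuous bijections of ℝ onto ℝ, and U has a continuous strictly increasing conditional CDF given (A, X). Then for each a ∈ {0,1} and v ∈ [0,1], the quantile-quantile associations agree: F_{M^(a)|A=0,X} ∘ F⁻¹_{M^(a)|A=1,X}(v) = F_{Y^(a)|A=0,X} ∘ F⁻¹_{Y^(a)|A=1,X}(v), both equaling F_{U|A=0,X} ∘ F⁻¹_{U|A=1,X}(v). -/
import Mathlib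


open MeasureTheory

/-- Conditional expectation of `W` given the event `s`. -/
noncomputable def cexp {Ω : Type*} [MeasurableSpace Ω] (μ : Measure Ω)
    (W : Ω → ℝ) (s : Set Ω) : ℝ :=
  (∫ ω in s, W ω ∂μ) / (μ s).toReal

/-- Conditional probability of `s` given the event `t`. -/
noncomputable def cpr {Ω : Type*} [MeasurableSpace Ω] (μ : Measure Ω)
    (s t : Set Ω) : ℝ :=
  (μ (s ∩ t)).toReal / (μ t).toReal

/-- Conditional independence of the random variable `W` and the event `s`,
given the event `C`. -/
def CIset {Ω : Type*} [MeasurableSpace Ω] (μ : Measure Ω) {β : Type*} [MeasurableSpace β]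
    (W : Ω → β) (s C : Set Ω) : Prop :=
  ∀ S : Set β, MeasurableSet S →
    (μ (W ⁻¹' S ∩ s ∩ C)).toReal * (μ C).toReal
      = (μ (W ⁻¹' S ∩ C)).toReal * (μ (s ∩ C)).toReal

/-- Conditional independence of the random variables `W1` and `W2`
given the event `C`. -/
def CIfun2 {Ω : Type*} [MeasurableSpace Ω] (μ : Measure Ω)
    {β1 β2 : Type*} [MeasurableSpace β1] [MeasurableSpace β2]
    (W1 : Ω → β1) (W2 : Ω → β2) (C : Set Ω) : Prop :=
  ∀ (S1 : Set β1) (S2 : Set β2), MeasurableSet S1 → MeasurableSet S2 →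
    (μ (W1 ⁻¹' S1 ∩ W2 ⁻¹' S2 ∩ C)).toReal * (μ C).toReal
      = (μ (W1 ⁻¹' S1 ∩ C)).toReal * (μ (W2 ⁻¹' S2 ∩ C)).toReal

/-- Domain indicator: observational (`O`) or experimental (`E`). -/
inductive Dom : Type
  | O
  | E
deriving DecidableEq

/-- Conditional CDF of `W` given the event `C`. -/
noncomputable def ccdf {Ω : Type*} [MeasurableSpace Ω] (μ : Measure Ω)
    (W : Ω → ℝ) (C : Set Ω) (w : ℝ) : ℝ :=
  (μ ({ω | W ω ≤ w} ∩ C)).toReal / (μ C).toReal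


theorem stmt7 {Ω 𝓧 : Type*} [MeasurableSpace Ω] (μ : Measure Ω) [IsProbabilityMeasure μ]
    (A U M Y : Ω → ℝ) (X : Ω → 𝓧)
    (gM gY : ℝ → 𝓧 → ℝ → ℝ)
    (hAbin : ∀ ω, A ω = 0 ∨ A ω = 1)
    (hM : ∀ ω, M ω = gM (A ω) (X ω) (U ω))
    (hY : ∀ ω, Y ω = gY (A ω) (X ω) (U ω))
    (hgM : ∀ (a : ℝ) (x : 𝓧),
      StrictMono (gM a x) ∧ Continuous (gM a x) ∧ Function.Bijective (gM a x))
    (hgY : ∀ (a : ℝ) (x : 𝓧),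
      StrictMono (gY a x) ∧ Continuous (gY a x) ∧ Function.Bijective (gY a x))
    (hUcdf : ∀ (a : ℝ) (x : 𝓧), (a = 0 ∨ a = 1) →
      StrictMono (ccdf μ U ({ω | A ω = a} ∩ {ω | X ω = x}))
        ∧ Continuous (ccdf μ U ({ω | A ω = a} ∩ {ω | X ω = x})))
    (hpos1 : ∀ x : 𝓧, μ ({ω | A ω = 1} ∩ {ω | X ω = x}) ≠ 0)
    (hpos0 : ∀ x : 𝓧, μ ({ω | A ω = 0} ∩ {ω | X ω = x}) ≠ 0) :
    ∀ a : ℝ, a = 0 ∨ a = 1 → ∀ x : 𝓧, ∀ v ∈ Set.Icc (0 : ℝ) 1, ∀ mA yA uA : ℝ,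
      ccdf μ (fun ω => gM a (X ω) (U ω)) ({ω | A ω = 1} ∩ {ω | X ω = x}) mA = v →
      ccdf μ (fun ω => gY a (X ω) (U ω)) ({ω | A ω = 1} ∩ {ω | X ω = x}) yA = v →
      ccdf μ U ({ω | A ω = 1} ∩ {ω | X ω = x}) uA = v →
      ccdf μ (fun ω => gM a (X ω) (U ω)) ({ω | A ω = 0} ∩ {ω | X ω = x}) mA
          = ccdf μ U ({ω | A ω = 0} ∩ {ω | X ω = x}) uA
        ∧ ccdf μ (fun ω => gY a (X ω) (U ω)) ({ω | A ω = 0} ∩ {ω | X ω = x}) yA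
          = ccdf μ U ({ω | A ω = 0} ∩ {ω | X ω = x}) uA := by
  intro a ha x v hv mA yA uA hM1 hY1 hU1
  -- key: composed ccdf equals ccdf of U at inverse point
  have key : ∀ (g : ℝ → 𝓧 → ℝ → ℝ),
      (∀ (a : ℝ) (x : 𝓧), StrictMono (g a x) ∧ Continuous (g a x)
        ∧ Function.Bijective (g a x)) →
      ∀ (a' m : ℝ),
        ccdf μ (fun ω => g a (X ω) (U ω)) ({ω | A ω = a'} ∩ {ω | X ω = x}) m
          = ccdf μ U ({ω | A ω = a'} ∩ {ω | X ω = x})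
              (Function.invFun (g a x) m) := by
    intro g hg a' m
    obtain ⟨hmono, _, hbij⟩ := hg a x
    have hinv : g a x (Function.invFun (g a x) m) = m :=
      Function.invFun_eq (hbij.surjective m)
    have hset : {ω | g a (X ω) (U ω) ≤ m} ∩ ({ω | A ω = a'} ∩ {ω | X ω = x})
        = {ω | U ω ≤ Function.invFun (g a x) m}
            ∩ ({ω | A ω = a'} ∩ {ω | X ω = x}) := by
      ext ω
      simp only [Set.mem_inter_iff, Set.mem_setOf_eq, and_congr_left_iff]
      rintro ⟨_, hX⟩
      rw [hX, ← hinv, hmono.le_iff_le, hinv]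
    unfold ccdf
    rw [hset]
  obtain ⟨hMmono, _, hMbij⟩ := hgM a x
  obtain ⟨hYmono, _, hYbij⟩ := hgY a x
  have hU1mono := (hUcdf 1 x (Or.inr rfl)).1
  -- identify inverse points with uA using injectivity of ccdf U given A=1
  have hMinv : Function.invFun (gM a x) mA = uA := by
    apply hU1mono.injective
    rw [← key gM hgM 1 mA, hM1, hU1]
  have hYinv : Function.invFun (gY a x) yA = uA := by
    apply hU1mono.injective
    rw [← key gY hgY 1 yA, hY1, hU1]
  constructor
  · rw [key gM hgM 0 mA, hMinv]
  · rw [key gY hgY 0 yA, hYinv]
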